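/- Let X be a random variable whose law is the mixed zero-Gamma measure μ_mix = p·δ₀ + (1 − p)·Gamma(a, s), with 0 ≤ p ≤ 1, a > 0, s > 0, and let g(x) = α(exp(βx) − 1) with α > 0, β > 0 and 2βs < 1. Then E[g(X)²] = α²·(1 − p)·(1/(1 − 2βs)^a − 2/(1 − βs)^a + 1). -/

import Mathlib

open MeasureTheory

/-- The Gamma distribution with shape `a > 0` and scale `s > 0`: the measure on `ℝ`
with density `x^(a−1)·exp(−x/s)/(Γ(a)·s^a)` for `x > 0` and `0` otherwise. -/
noncomputable def gammaScaleMeasure (a s : ℝ) : Measure ℝ :=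
  volume.withDensity fun x =>
    ENNReal.ofReal
      (if 0 < x then x ^ (a - 1) * Real.exp (-x / s) / (Real.Gamma a * s ^ a) else 0)

/-- The mixed zero-Gamma measure `μ_mix = p·δ₀ + (1 − p)·Gamma(a, s)` of the paper
(Eq. (6)): point mass `p` at `0` mixed with the `Gamma(a, s)` distribution. -/
noncomputable def zeroGammaMeasure (p a s : ℝ) : Measure ℝ :=
  ENNReal.ofReal p • Measure.dirac (0 : ℝ) + ENNReal.ofReal (1 - p) • gammaScaleMeasure a s

/-!
Since `g(x)² = α² (e^{2βx} - 2 e^{βx} + 1)` and `g(0) = 0`, the atom at `0` does not contribute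
and the moment reduces to the moment generating function `t ↦ E[e^{tY}]` of `Y ~ Gamma(a, s)` at
`t = β, 2β`. That one is computed by exponential tilting: with rate `r = 1/s`, the `Gamma(a, r)`
density times `e^{tx}` is `(r / (r - t))^a` times the `Gamma(a, r - t)` density, so
`E[e^{tY}] = (1 - ts)^{-a}`.
-/

open Real ProbabilityTheory

namespace ProbabilityTheory

variable {a r : ℝ}

lemma integral_gammaMeasure (ha : 0 < a) (hr : 0 < r) (g : ℝ → ℝ) :
    ∫ x, g x ∂gammaMeasure a r = ∫ x, gammaPDFReal a r x * g x := by
  rw [gammaMeasure, integral_withDensity_eq_integral_toReal_smul (f := gammaPDF a r)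
    (measurable_gammaPDFReal a r).ennreal_ofReal (ae_of_all _ fun _ => ENNReal.ofReal_lt_top)]
  simp only [gammaPDF, ENNReal.toReal_ofReal (gammaPDFReal_nonneg ha hr _), smul_eq_mul]

lemma integrable_gammaMeasure_iff (ha : 0 < a) (hr : 0 < r) {g : ℝ → ℝ} :
    Integrable g (gammaMeasure a r) ↔ Integrable (fun x => gammaPDFReal a r x * g x) := by
  rw [gammaMeasure, integrable_withDensity_iff_integrable_smul' (f := gammaPDF a r)
    (measurable_gammaPDFReal a r).ennreal_ofReal (ae_of_all _ fun _ => ENNReal.ofReal_lt_top)]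
  simp only [gammaPDF, ENNReal.toReal_ofReal (gammaPDFReal_nonneg ha hr _), smul_eq_mul]

lemma integrable_gammaPDFReal (ha : 0 < a) (hr : 0 < r) : Integrable (gammaPDFReal a r) := by
  have := isProbabilityMeasure_gammaMeasure ha hr
  simpa using (integrable_gammaMeasure_iff ha hr).1 (integrable_const (1 : ℝ))

lemma integral_gammaPDFReal (ha : 0 < a) (hr : 0 < r) : ∫ x, gammaPDFReal a r x = 1 := by
  have := isProbabilityMeasure_gammaMeasure ha hr
  simpa using (integral_gammaMeasure ha hr fun _ => (1 : ℝ)).symm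

lemma gammaPDFReal_mul_exp {t : ℝ} (hr : 0 ≤ r) (ht : t < r) (x : ℝ) :
    gammaPDFReal a r x * exp (t * x) = (r / (r - t)) ^ a * gammaPDFReal a (r - t) x := by
  have hrt : 0 < r - t := sub_pos.2 ht
  unfold gammaPDFReal
  split_ifs
  · rw [div_rpow hr hrt.le, mul_assoc, ← exp_add]
    field_simp
    ring_nf
  · simp

lemma integrable_exp_mul_gammaMeasure {t : ℝ} (ha : 0 < a) (hr : 0 < r) (ht : t < r) :
    Integrable (fun x => exp (t * x)) (gammaMeasure a r) := by
  rw [integrable_gammaMeasure_iff ha hr]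
  simp_rw [gammaPDFReal_mul_exp hr.le ht]
  exact (integrable_gammaPDFReal ha (sub_pos.2 ht)).const_mul _

lemma integral_exp_mul_gammaMeasure {t : ℝ} (ha : 0 < a) (hr : 0 < r) (ht : t < r) :
    ∫ x, exp (t * x) ∂gammaMeasure a r = (r / (r - t)) ^ a := by
  simp_rw [integral_gammaMeasure ha hr, gammaPDFReal_mul_exp hr.le ht, integral_const_mul,
    integral_gammaPDFReal ha (sub_pos.2 ht), mul_one]

end ProbabilityTheory

lemma gammaScaleMeasure_eq_gammaMeasure {a s : ℝ} (hs : 0 < s) :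
    gammaScaleMeasure a s = gammaMeasure a s⁻¹ := by
  refine withDensity_congr_ae ?_
  filter_upwards [Measure.ae_ne volume (0 : ℝ)] with x hx
  rw [gammaPDF, gammaPDFReal]
  rcases hx.lt_or_gt with hneg | hpos
  · simp [hneg.not_gt, hneg.not_ge]
  · rw [if_pos hpos, if_pos hpos.le, inv_rpow hs.le]
    congr 1
    field_simp

section gammaScale

variable {a s t : ℝ}

lemma isProbabilityMeasure_gammaScaleMeasure (ha : 0 < a) (hs : 0 < s) :
    IsProbabilityMeasure (gammaScaleMeasure a s) :=
  gammaScaleMeasure_eq_gammaMeasure hs ▸ isProbabilityMeasure_gammaMeasure ha (inv_pos.2 hs)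

lemma integrable_exp_mul_gammaScaleMeasure (ha : 0 < a) (hs : 0 < s) (hts : t * s < 1) :
    Integrable (fun x => exp (t * x)) (gammaScaleMeasure a s) := by
  have ht : t < s⁻¹ := by rwa [← one_div, lt_div_iff₀ hs]
  rw [gammaScaleMeasure_eq_gammaMeasure hs]
  exact integrable_exp_mul_gammaMeasure ha (inv_pos.2 hs) ht

lemma integral_exp_mul_gammaScaleMeasure (ha : 0 < a) (hs : 0 < s) (hts : t * s < 1) :
    ∫ x, exp (t * x) ∂gammaScaleMeasure a s = 1 / (1 - t * s) ^ a := by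
  have ht : t < s⁻¹ := by rwa [← one_div, lt_div_iff₀ hs]
  have hrate : s⁻¹ / (s⁻¹ - t) = 1 / (1 - t * s) := by field_simp
  rw [gammaScaleMeasure_eq_gammaMeasure hs, integral_exp_mul_gammaMeasure ha (inv_pos.2 hs) ht,
    hrate, div_rpow zero_le_one (sub_pos.2 hts).le, one_rpow]

end gammaScale

lemma integral_zeroGammaMeasure_of_apply_zero {p a s : ℝ} (hp : p ≤ 1) {f : ℝ → ℝ}
    (hf0 : f 0 = 0) (hf : Integrable f (gammaScaleMeasure a s)) :
    ∫ x, f x ∂zeroGammaMeasure p a s = (1 - p) * ∫ x, f x ∂gammaScaleMeasure a s := by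
  rw [zeroGammaMeasure, integral_add_measure
    ((integrable_dirac (by simp)).smul_measure ENNReal.ofReal_ne_top)
    (hf.smul_measure ENNReal.ofReal_ne_top), integral_smul_measure, integral_smul_measure,
    integral_dirac, hf0, ENNReal.toReal_ofReal (sub_nonneg.2 hp), smul_zero, zero_add, smul_eq_mul]

section sqExp

variable {μ : Measure ℝ} (α : ℝ) {β : ℝ}

lemma sq_mul_exp_sub_one (x : ℝ) :
    (α * (exp (β * x) - 1)) ^ 2 = α ^ 2 * exp (2 * β * x) - 2 * α ^ 2 * exp (β * x) + α ^ 2 := by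
  rw [show 2 * β * x = β * x + β * x by ring, exp_add]
  ring

lemma integrable_sq_mul_exp_sub_one [IsFiniteMeasure μ]
    (h₁ : Integrable (fun x => exp (β * x)) μ) (h₂ : Integrable (fun x => exp (2 * β * x)) μ) :
    Integrable (fun x => (α * (exp (β * x) - 1)) ^ 2) μ := by
  simp_rw [sq_mul_exp_sub_one]
  exact ((h₂.const_mul _).sub (h₁.const_mul _)).add (integrable_const _)

lemma integral_sq_mul_exp_sub_one [IsProbabilityMeasure μ]
    (h₁ : Integrable (fun x => exp (β * x)) μ) (h₂ : Integrable (fun x => exp (2 * β * x)) μ) :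
    ∫ x, (α * (exp (β * x) - 1)) ^ 2 ∂μ =
      α ^ 2 * (∫ x, exp (2 * β * x) ∂μ - 2 * ∫ x, exp (β * x) ∂μ + 1) := by
  have h₂₁ : Integrable (fun x => α ^ 2 * exp (2 * β * x) - 2 * α ^ 2 * exp (β * x)) μ :=
    (h₂.const_mul _).sub (h₁.const_mul _)
  simp_rw [sq_mul_exp_sub_one]
  rw [integral_add h₂₁ (integrable_const _),
    integral_sub (h₂.const_mul _) (h₁.const_mul _), integral_const_mul, integral_const_mul,
    integral_const, probReal_univ, one_smul]
  ring

end sqExp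

theorem zeroExpGamma_second_moment_general {Ω : Type*} [MeasurableSpace Ω] (P : Measure Ω)
    (X : Ω → ℝ) (hX : Measurable X)
    (p a s α β : ℝ) (hp1 : p ≤ 1) (ha : 0 < a) (hs : 0 < s)
    (hβs : 2 * β * s < 1)
    (hlaw : Measure.map X P = zeroGammaMeasure p a s) :
    ∫ ω, (α * (Real.exp (β * X ω) - 1)) ^ 2 ∂P =
      α ^ 2 * (1 - p) * (1 / (1 - 2 * β * s) ^ a - 2 / (1 - β * s) ^ a + 1) := by
  have hβs' : β * s < 1 := by nlinarith
  have := isProbabilityMeasure_gammaScaleMeasure ha hs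
  have h₁ := integrable_exp_mul_gammaScaleMeasure ha hs hβs'
  have h₂ := integrable_exp_mul_gammaScaleMeasure ha hs hβs
  rw [← integral_map (f := fun x => (α * (exp (β * x) - 1)) ^ 2) hX.aemeasurable
      (by fun_prop), hlaw,
    integral_zeroGammaMeasure_of_apply_zero hp1 (by simp)
      (integrable_sq_mul_exp_sub_one α h₁ h₂),
    integral_sq_mul_exp_sub_one α h₁ h₂, integral_exp_mul_gammaScaleMeasure ha hs hβs,
    integral_exp_mul_gammaScaleMeasure ha hs hβs']
  ring

/-- Second moment of the zero-ExpGamma distribution (Appendix F of the paper): if the law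
of `X` is the mixed zero-Gamma measure and `g(x) = α(exp(βx) − 1)` with `α > 0`, `β > 0`,
`2βs < 1`, then `E[g(X)²] = α²·(1 − p)·(1/(1 − 2βs)^a − 2/(1 − βs)^a + 1)`. -/
theorem zeroExpGamma_second_moment {Ω : Type*} [MeasurableSpace Ω] (P : Measure Ω)
    [IsProbabilityMeasure P] (X : Ω → ℝ) (hX : Measurable X)
    (p a s α β : ℝ) (hp0 : 0 ≤ p) (hp1 : p ≤ 1) (ha : 0 < a) (hs : 0 < s)
    (hα : 0 < α) (hβ : 0 < β) (hβs : 2 * β * s < 1)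
    (hlaw : Measure.map X P = zeroGammaMeasure p a s) :
    ∫ ω, (α * (Real.exp (β * X ω) - 1)) ^ 2 ∂P =
      α ^ 2 * (1 - p) * (1 / (1 - 2 * β * s) ^ a - 2 / (1 - β * s) ^ a + 1) :=
  zeroExpGamma_second_moment_general P X hX p a s α β hp1 ha hs hβs hlaw
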